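/- For every integer m ≥ 2 and real numbers 0 < v_1 < v_2 < ⋯ < v_m, the inequality c_{m−1} > (v_1 + v_2 + ⋯ + v_{m−1}) / (v_1 + v_2 + ⋯ + v_m) holds; consequently 1 + c_m* ≥ 1 + c_{m−1} > 2 − v_m/(v_1 + v_2 + ⋯ + v_m). -/

import Mathlib

/-- `csum v i = ∑_{j=1}^{i-1} 2^{j-1} v_{i-j}` (empty sum is 0). -/
noncomputable def csum (v : ℕ → ℝ) (i : ℕ) : ℝ :=
  ∑ j ∈ Finset.Icc 1 (i - 1), (2 : ℝ) ^ (j - 1) * v (i - j)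

/-- `cval v i = c_i = (v_i + csum v i) / (v_{i+1} + csum v i)`. -/
noncomputable def cval (v : ℕ → ℝ) (i : ℕ) : ℝ :=
  (v i + csum v i) / (v (i + 1) + csum v i)

/-- `cstar v m = c_m^* = max_{1 ≤ i ≤ m-1} c_i`. -/
noncomputable def cstar (v : ℕ → ℝ) (m : ℕ) : ℝ :=
  if hne : (Finset.Icc 1 (m - 1)).Nonempty then (Finset.Icc 1 (m - 1)).sup' hne (cval v)
  else 0

/-!
Write `c_{m-1} = (v_{m-1} + S) / (v_m + S)` with `S = csum v (m-1)`. Every weight `2^{j-1}` is at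
least `1`, so `S ≥ R := v_1 + ⋯ + v_{m-2}`. The claim is then
`(R + v_{m-1}) / (R + v_{m-1} + v_m) < (v_{m-1} + S) / (v_m + S)`, which after cross-multiplying
says `v_{m-1} (R + v_{m-1}) + v_m (S - R) > 0`.
-/

open Finset

lemma pos_of_pos_of_lt_succ {v : ℕ → ℝ} {m : ℕ} (hv1 : 0 < v 1)
    (hv : ∀ i, 1 ≤ i → i < m → v i < v (i + 1)) : ∀ i, 1 ≤ i → i ≤ m → 0 < v i := by
  intro i hi him
  induction i, hi using Nat.le_induction with
  | base => exact hv1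
  | succ k hk ih => exact (ih (by omega)).trans (hv k hk (by omega))

lemma sum_Icc_le_csum {v : ℕ → ℝ} {i : ℕ} (hv : ∀ k, 1 ≤ k → k < i → 0 ≤ v k) :
    ∑ k ∈ Icc 1 (i - 1), v k ≤ csum v i := by
  have hreflect : ∑ k ∈ Icc 1 (i - 1), v k = ∑ j ∈ Icc 1 (i - 1), v (i - j) :=
    sum_nbij' (fun k => i - k) (fun j => i - j)
      (by intro k hk; simp only [mem_Icc] at hk ⊢; omega)
      (by intro j hj; simp only [mem_Icc] at hj ⊢; omega)
      (by intro k hk; simp only [mem_Icc] at hk; omega)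
      (by intro j hj; simp only [mem_Icc] at hj; omega)
      (by intro k hk; simp only [mem_Icc] at hk; congr 1; omega)
  rw [hreflect, csum]
  refine sum_le_sum fun j hj => ?_
  simp only [mem_Icc] at hj
  exact le_mul_of_one_le_left (hv _ (by omega) (by omega)) (one_le_pow₀ (by norm_num))

lemma cval_le_cstar {v : ℕ → ℝ} {i m : ℕ} (hi : 1 ≤ i) (him : i < m) :
    cval v i ≤ cstar v m := by
  have hmem : i ∈ Icc 1 (m - 1) := mem_Icc.2 ⟨hi, by omega⟩
  rw [cstar, dif_pos ⟨i, hmem⟩]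
  exact le_sup' (cval v) hmem

lemma div_add_lt_div_add {R S a b : ℝ} (hR : 0 ≤ R) (hRS : R ≤ S) (ha : 0 < a) (hb : 0 < b) :
    (R + a) / (R + a + b) < (a + S) / (b + S) := by
  rw [div_lt_div_iff₀ (by linarith) (by linarith)]
  nlinarith [mul_nonneg hb.le (sub_nonneg.2 hRS), mul_pos ha (add_pos_of_nonneg_of_pos hR ha)]

/-- For every `m ≥ 2` and reals `0 < v 1 < ⋯ < v m`, one has
`c_{m-1} > (v_1 + ⋯ + v_{m-1}) / (v_1 + ⋯ + v_m)`; consequently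
`1 + c_m^* ≥ 1 + c_{m-1} > 2 - v_m / (v_1 + ⋯ + v_m)`. -/
theorem stmt10 (m : ℕ) (hm : 2 ≤ m) (v : ℕ → ℝ)
    (hv1 : 0 < v 1) (hv : ∀ i, 1 ≤ i → i < m → v i < v (i + 1)) :
    cval v (m - 1) > (∑ i ∈ Finset.Icc 1 (m - 1), v i) / (∑ i ∈ Finset.Icc 1 m, v i) ∧
    1 + cstar v m ≥ 1 + cval v (m - 1) ∧
    1 + cval v (m - 1) > 2 - v m / (∑ i ∈ Finset.Icc 1 m, v i) := by
  have hpos := pos_of_pos_of_lt_succ hv1 hv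
  obtain ⟨n, rfl⟩ : ∃ n, m = n + 2 := ⟨m - 2, by omega⟩
  have hR : 0 ≤ ∑ i ∈ Icc 1 n, v i :=
    sum_nonneg fun i hi => (hpos i (mem_Icc.1 hi).1 (by simp at hi; omega)).le
  have hRS : ∑ i ∈ Icc 1 n, v i ≤ csum v (n + 1) :=
    sum_Icc_le_csum (i := n + 1) fun k hk _ => (hpos k hk (by omega)).le
  have hsum_top : ∑ i ∈ Icc 1 (n + 2), v i = ∑ i ∈ Icc 1 (n + 1), v i + v (n + 2) :=
    sum_Icc_succ_top (by omega) v
  have hsum : ∑ i ∈ Icc 1 (n + 2), v i = ∑ i ∈ Icc 1 n, v i + v (n + 1) + v (n + 2) := by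
    rw [hsum_top, sum_Icc_succ_top (by omega)]
  have hlt : (∑ i ∈ Icc 1 (n + 1), v i) / (∑ i ∈ Icc 1 (n + 2), v i)
      < cval v (n + 1) := by
    rw [hsum, sum_Icc_succ_top (by omega), cval]
    exact div_add_lt_div_add hR hRS (hpos _ (by omega) (by omega)) (hpos _ (by omega) le_rfl)
  have hB : ∑ i ∈ Icc 1 (n + 2), v i ≠ 0 := by
    rw [hsum]; linarith [hpos (n + 1) (by omega) (by omega), hpos (n + 2) (by omega) le_rfl]
  have hsplit : (∑ i ∈ Icc 1 (n + 1), v i) / (∑ i ∈ Icc 1 (n + 2), v i)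
      = 1 - v (n + 2) / (∑ i ∈ Icc 1 (n + 2), v i) := by
    rw [eq_sub_iff_add_eq, ← add_div, ← hsum_top, div_self hB]
  rw [show n + 2 - 1 = n + 1 from rfl]
  exact ⟨hlt, by linarith [cval_le_cstar (v := v) (by omega : 1 ≤ n + 1) (by omega : n + 1 < n + 2)],
    by linarith⟩
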